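/- Let 0 < α < 2, 0 < β < 2, let μ be a positive (finite) Borel measure on [0,1), let ε > 0, and let N₀ be a natural number such that μ[n] ≤ ε (n+1)^{-1-(α-β)/2} for all integers n > N₀. Then there is a constant C > 0 depending only on α (one may take C = 2(2+α)/α²) such that for every natural number N ≥ N₀ and every complex sequence (a_n)_{n≥0} with ∑_{n≥0} (n+1)^{1-α} |a_n|² < ∞, one has ∑_{n=N+1}^{∞} (n+1)^{1-β} (μ[n])² |∑_{k=0}^{n} a_k|² ≤ C ε² ∑_{n≥0} (n+1)^{1-α} |a_n|². -/

import Mathlib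

/-!
Put `s = α / 2`. Cauchy–Schwarz with the weights `(k+1)^(s-1)`, whose partial sums up to `n`
are at most `(n+1)^s / s`, gives `‖∑_{k≤n} a_k‖² ≤ (n+1)^s / s · ∑_{k≤n} (k+1)^(1-s) ‖a_k‖²`,
so by the moment bound the `n`-th tail term is at most
`ε² / s · (n+1)^(-1-s) ∑_{k≤n} (k+1)^(1-s) ‖a_k‖²`. Exchanging the order of summation and using
`∑_{n≥k} (n+1)^(-1-s) ≤ 2 / s · (k+1)^(-s)` leaves `2 ε² / s² · ∑_k (k+1)^(1-α) ‖a_k‖²`.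
Both elementary sum bounds telescope, by the concavity estimate
`p (x+1)^(p-1) ≤ (x+1)^p - x^p` for `0 ≤ p ≤ 1`.
-/

open MeasureTheory Finset Real

lemma mul_add_one_rpow_sub_one_le_sub {p x : ℝ} (hp0 : 0 ≤ p) (hp1 : p ≤ 1) (hx : 0 ≤ x) :
    p * (x + 1) ^ (p - 1) ≤ (x + 1) ^ p - x ^ p := by
  have hx1 : 0 < x + 1 := by linarith
  have hbern := rpow_one_add_le_one_add_mul_self (s := -(x + 1)⁻¹)
    (by linarith [inv_le_one_of_one_le₀ (by linarith : (1 : ℝ) ≤ x + 1)]) hp0 hp1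
  rw [show 1 + -(x + 1)⁻¹ = x / (x + 1) by field_simp; ring, div_rpow hx hx1.le,
    div_le_iff₀ (by positivity)] at hbern
  rw [rpow_sub_one hx1.ne']
  calc p * ((x + 1) ^ p / (x + 1)) = (x + 1) ^ p - (1 + p * -(x + 1)⁻¹) * (x + 1) ^ p := by
        field_simp; ring
    _ ≤ (x + 1) ^ p - x ^ p := by linarith

lemma rpow_neg_one_sub_le {s x : ℝ} (hs0 : 0 < s) (hs1 : s ≤ 1) (hx : 1 ≤ x) :
    x ^ (-1 - s) ≤ 2 / s * (x ^ (-s) - (x + 1) ^ (-s)) := by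
  have hx0 : 0 < x := by linarith
  have hconc := mul_add_one_rpow_sub_one_le_sub hs0.le hs1 hx0.le
  rw [rpow_sub_one (by linarith), mul_div_assoc', div_le_iff₀ (by linarith)] at hconc
  have hmono : 0 ≤ (x + 1) ^ s - x ^ s := by nlinarith [show 0 < s * (x + 1) ^ s by positivity]
  have key : s * (x + 1) ^ s ≤ 2 * x * ((x + 1) ^ s - x ^ s) := by nlinarith
  calc x ^ (-1 - s) = s * (x + 1) ^ s / (s * x * x ^ s * (x + 1) ^ s) := by
        rw [rpow_sub hx0, rpow_neg_one]; field_simp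
    _ ≤ 2 * x * ((x + 1) ^ s - x ^ s) / (s * x * x ^ s * (x + 1) ^ s) := by gcongr
    _ = 2 / s * (x ^ (-s) - (x + 1) ^ (-s)) := by
        rw [rpow_neg hx0.le, rpow_neg (by linarith)]; field_simp

lemma sum_range_rpow_sub_one_le {s : ℝ} (hs0 : 0 < s) (hs1 : s ≤ 1) (n : ℕ) :
    ∑ k ∈ range n, ((k : ℝ) + 1) ^ (s - 1) ≤ (n : ℝ) ^ s / s := by
  rw [le_div_iff₀ hs0, sum_mul]
  calc ∑ k ∈ range n, ((k : ℝ) + 1) ^ (s - 1) * s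
      ≤ ∑ k ∈ range n, (((k + 1 : ℕ) : ℝ) ^ s - (k : ℝ) ^ s) := by
        gcongr with k
        push_cast
        linarith [mul_add_one_rpow_sub_one_le_sub hs0.le hs1 (k.cast_nonneg (α := ℝ))]
    _ = (n : ℝ) ^ s := by
        rw [sum_range_sub (fun k => (k : ℝ) ^ s)]; simp [zero_rpow hs0.ne']

lemma sum_Ico_rpow_neg_one_sub_le {s : ℝ} (hs0 : 0 < s) (hs1 : s ≤ 1) (k L : ℕ) :
    ∑ n ∈ Ico k L, ((n : ℝ) + 1) ^ (-1 - s) ≤ 2 / s * ((k : ℝ) + 1) ^ (-s) := by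
  rcases le_or_gt k L with hkL | hLk
  · set F : ℕ → ℝ := fun n => -(2 / s * ((n : ℝ) + 1) ^ (-s))
    have hFL : 0 ≤ 2 / s * ((L : ℝ) + 1) ^ (-s) := by positivity
    calc ∑ n ∈ Ico k L, ((n : ℝ) + 1) ^ (-1 - s) ≤ ∑ n ∈ Ico k L, (F (n + 1) - F n) := by
          gcongr with n
          have := rpow_neg_one_sub_le hs0 hs1 (le_add_of_nonneg_left (n.cast_nonneg (α := ℝ)))
          simp only [F]; push_cast; linarith
      _ = F L - F k := sum_Ico_sub F hkL
      _ ≤ 2 / s * ((k : ℝ) + 1) ^ (-s) := by simp only [F]; linarith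
  · rw [Ico_eq_empty_of_le hLk.le, sum_empty]
    positivity

lemma norm_sum_sq_le_sum_mul_sum_sq_div {ι E : Type*} [SeminormedAddCommGroup E] (t : Finset ι)
    (a : ι → E) {w : ι → ℝ} (hw : ∀ i ∈ t, 0 < w i) :
    ‖∑ i ∈ t, a i‖ ^ 2 ≤ (∑ i ∈ t, w i) * ∑ i ∈ t, ‖a i‖ ^ 2 / w i := by
  calc ‖∑ i ∈ t, a i‖ ^ 2 ≤ (∑ i ∈ t, ‖a i‖) ^ 2 := by gcongr; exact norm_sum_le _ _
    _ ≤ _ := sum_sq_le_sum_mul_sum_of_sq_le_mul t (fun i hi => (hw i hi).le)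
        (fun i hi => by have := hw i hi; positivity)
        (fun i hi => by rw [mul_div_cancel₀ _ (hw i hi).ne'])

lemma norm_sum_range_sq_le {E : Type*} [SeminormedAddCommGroup E] {s : ℝ} (hs0 : 0 < s)
    (hs1 : s ≤ 1) (a : ℕ → E) (n : ℕ) :
    ‖∑ k ∈ range n, a k‖ ^ 2 ≤
      (n : ℝ) ^ s / s * ∑ k ∈ range n, ((k : ℝ) + 1) ^ (1 - s) * ‖a k‖ ^ 2 := by
  calc ‖∑ k ∈ range n, a k‖ ^ 2
      ≤ (∑ k ∈ range n, ((k : ℝ) + 1) ^ (s - 1)) *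
          ∑ k ∈ range n, ‖a k‖ ^ 2 / ((k : ℝ) + 1) ^ (s - 1) :=
        norm_sum_sq_le_sum_mul_sum_sq_div _ a fun k _ => by positivity
    _ = (∑ k ∈ range n, ((k : ℝ) + 1) ^ (s - 1)) *
          ∑ k ∈ range n, ((k : ℝ) + 1) ^ (1 - s) * ‖a k‖ ^ 2 := by
        congr 1; refine sum_congr rfl fun k _ => ?_
        rw [div_eq_mul_inv, ← rpow_neg (by positivity), neg_sub, mul_comm]
    _ ≤ _ := by
        gcongr
        exact sum_range_rpow_sub_one_le hs0 hs1 n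

lemma sum_range_rpow_mul_sum_range_succ_le {s : ℝ} (hs0 : 0 < s) (hs1 : s ≤ 1) {b : ℕ → ℝ}
    (hb : ∀ k, 0 ≤ b k) (L : ℕ) :
    ∑ n ∈ range L,
        ((n : ℝ) + 1) ^ (-1 - s) * ∑ k ∈ range (n + 1), ((k : ℝ) + 1) ^ (1 - s) * b k ≤
      2 / s * ∑ k ∈ range L, ((k : ℝ) + 1) ^ (1 - 2 * s) * b k := by
  have hswap := sum_Ico_Ico_comm 0 L fun k n =>
    ((n : ℝ) + 1) ^ (-1 - s) * (((k : ℝ) + 1) ^ (1 - s) * b k)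
  simp only [← range_eq_Ico] at hswap
  simp only [mul_sum, ← hswap, ← sum_mul]
  refine sum_le_sum fun k _ => ?_
  calc (∑ n ∈ Ico k L, ((n : ℝ) + 1) ^ (-1 - s)) * (((k : ℝ) + 1) ^ (1 - s) * b k)
      ≤ 2 / s * ((k : ℝ) + 1) ^ (-s) * (((k : ℝ) + 1) ^ (1 - s) * b k) := by
        have := hb k
        gcongr
        exact sum_Ico_rpow_neg_one_sub_le hs0 hs1 k L
    _ = 2 / s * (((k : ℝ) + 1) ^ (1 - 2 * s) * b k) := by
        rw [show 1 - 2 * s = -s + (1 - s) by ring, rpow_add (by positivity)]; ring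

lemma rpow_mul_sq_mul_norm_sum_sq_le {E : Type*} [SeminormedAddCommGroup E] {s β ε c : ℝ}
    (hs0 : 0 < s) (hs1 : s ≤ 1) (a : ℕ → E) (n : ℕ) (hc0 : 0 ≤ c)
    (hc : c ≤ ε * ((n : ℝ) + 1) ^ (-(1 + (2 * s - β) / 2))) :
    ((n : ℝ) + 1) ^ (1 - β) * c ^ 2 * ‖∑ k ∈ range (n + 1), a k‖ ^ 2 ≤
      ε ^ 2 / s * (((n : ℝ) + 1) ^ (-1 - s) *
        ∑ k ∈ range (n + 1), ((k : ℝ) + 1) ^ (1 - s) * ‖a k‖ ^ 2) := by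
  have hx : 0 < (n : ℝ) + 1 := by positivity
  have hc2 : c ^ 2 ≤ ε ^ 2 * ((n : ℝ) + 1) ^ (-(1 + (2 * s - β) / 2) * 2) := by
    rw [rpow_mul hx.le, rpow_two, ← mul_pow]
    exact pow_le_pow_left₀ hc0 hc 2
  have hsum := norm_sum_range_sq_le hs0 hs1 a (n + 1)
  push_cast at hsum
  calc ((n : ℝ) + 1) ^ (1 - β) * c ^ 2 * ‖∑ k ∈ range (n + 1), a k‖ ^ 2
      ≤ ((n : ℝ) + 1) ^ (1 - β) * (ε ^ 2 * ((n : ℝ) + 1) ^ (-(1 + (2 * s - β) / 2) * 2)) *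
          (((n : ℝ) + 1) ^ s / s *
            ∑ k ∈ range (n + 1), ((k : ℝ) + 1) ^ (1 - s) * ‖a k‖ ^ 2) := by
        gcongr
    _ = ε ^ 2 / s * (((n : ℝ) + 1) ^ (1 - β + -(1 + (2 * s - β) / 2) * 2 + s) *
          ∑ k ∈ range (n + 1), ((k : ℝ) + 1) ^ (1 - s) * ‖a k‖ ^ 2) := by
        rw [rpow_add hx, rpow_add hx]; ring
    _ = _ := by ring_nf

theorem tail_estimate_general (α β : ℝ) (hα0 : 0 < α) (hα2 : α < 2)
    (μ : Measure ℝ)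
    (ε : ℝ) (N₀ : ℕ)
    (hmom : ∀ n : ℕ, N₀ < n →
      (∫ t in Set.Ico (0 : ℝ) 1, t ^ n ∂μ) ≤ ε * ((n : ℝ) + 1) ^ (-(1 + (α - β) / 2))) :
    ∃ C > (0 : ℝ), ∀ N : ℕ, N₀ ≤ N → ∀ a : ℕ → ℂ,
      Summable (fun n : ℕ => ((n : ℝ) + 1) ^ (1 - α) * ‖a n‖ ^ 2) →
      ∑' m : ℕ, (((N + 1 + m : ℕ) : ℝ) + 1) ^ (1 - β) *
          (∫ t in Set.Ico (0 : ℝ) 1, t ^ (N + 1 + m) ∂μ) ^ 2 *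
          ‖∑ k ∈ Finset.range (N + 1 + m + 1), a k‖ ^ 2 ≤
        C * ε ^ 2 * ∑' n : ℕ, ((n : ℝ) + 1) ^ (1 - α) * ‖a n‖ ^ 2 := by
  obtain ⟨s, rfl⟩ : ∃ s, α = 2 * s := ⟨α / 2, by ring⟩
  have hs0 : 0 < s := by linarith
  have hs1 : s ≤ 1 := by linarith
  refine ⟨2 / s ^ 2, by positivity, fun N hN a ha => ?_⟩
  refine Real.tsum_le_of_sum_range_le (fun m => by positivity) fun M => ?_
  set W : ℕ → ℝ := fun n =>
    ((n : ℝ) + 1) ^ (-1 - s) * ∑ k ∈ range (n + 1), ((k : ℝ) + 1) ^ (1 - s) * ‖a k‖ ^ 2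
  have hW : ∀ n, 0 ≤ W n := fun n => by positivity
  calc _ ≤ ∑ m ∈ range M, ε ^ 2 / s * W (N + 1 + m) := by
        refine sum_le_sum fun m _ => ?_
        exact rpow_mul_sq_mul_norm_sum_sq_le hs0 hs1 a (N + 1 + m)
          (setIntegral_nonneg measurableSet_Ico fun t ht => pow_nonneg ht.1 _) (hmom _ (by omega))
    _ ≤ ε ^ 2 / s * ∑ n ∈ range (N + 1 + M), W n := by
        rw [← mul_sum, sum_range_add]
        gcongr
        exact le_add_of_nonneg_left (sum_nonneg fun n _ => hW n)
    _ ≤ ε ^ 2 / s *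
          (2 / s * ∑ k ∈ range (N + 1 + M), ((k : ℝ) + 1) ^ (1 - 2 * s) * ‖a k‖ ^ 2) := by
        gcongr
        exact sum_range_rpow_mul_sum_range_succ_le hs0 hs1 (fun k => by positivity) _
    _ ≤ 2 / s ^ 2 * ε ^ 2 * ∑' n : ℕ, ((n : ℝ) + 1) ^ (1 - 2 * s) * ‖a n‖ ^ 2 := by
        rw [show 2 / s ^ 2 * ε ^ 2 = ε ^ 2 / s * (2 / s) by ring, mul_assoc]
        gcongr
        exact ha.sum_le_tsum _ fun n _ => by positivity

/-- Tail estimate for the generalized Cesàro operator: if `μ[n] ≤ ε (n+1)^{-1-(α-β)/2}`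
for all `n > N₀`, then there is `C > 0` such that for all `N ≥ N₀` and all `a ∈ D_α`,
`∑_{n=N+1}^∞ (n+1)^{1-β} (μ[n])² |∑_{k=0}^n a_k|² ≤ C ε² ∑_{n≥0} (n+1)^{1-α} |a_n|²`.
The tail sum over `n ≥ N+1` is written as a sum over `m : ℕ` with `n = N + 1 + m`. -/
theorem tail_estimate (α β : ℝ) (hα0 : 0 < α) (hα2 : α < 2) (hβ0 : 0 < β) (hβ2 : β < 2)
    (μ : Measure ℝ) [IsFiniteMeasure μ] (hμsupp : μ (Set.Ico (0 : ℝ) 1)ᶜ = 0)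
    (ε : ℝ) (hε : 0 < ε) (N₀ : ℕ)
    (hmom : ∀ n : ℕ, N₀ < n →
      (∫ t in Set.Ico (0 : ℝ) 1, t ^ n ∂μ) ≤ ε * ((n : ℝ) + 1) ^ (-(1 + (α - β) / 2))) :
    ∃ C > (0 : ℝ), ∀ N : ℕ, N₀ ≤ N → ∀ a : ℕ → ℂ,
      Summable (fun n : ℕ => ((n : ℝ) + 1) ^ (1 - α) * ‖a n‖ ^ 2) →
      ∑' m : ℕ, (((N + 1 + m : ℕ) : ℝ) + 1) ^ (1 - β) *
          (∫ t in Set.Ico (0 : ℝ) 1, t ^ (N + 1 + m) ∂μ) ^ 2 *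
          ‖∑ k ∈ Finset.range (N + 1 + m + 1), a k‖ ^ 2 ≤
        C * ε ^ 2 * ∑' n : ℕ, ((n : ℝ) + 1) ^ (1 - α) * ‖a n‖ ^ 2 :=
  tail_estimate_general α β hα0 hα2 μ ε N₀ hmom
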